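/- arXiv:1409.3741 — 2 statements merged into one kernel-verified Lean document; each statement's English description precedes it below -/
import Mathlib

section
/- Let x, x', q be vectors in the simplex Δ_m and let A be an m×m real matrix with all payoff values (x'')ᵀ A y'' in [0,1] for all x'', y'' ∈ Δ_m. If q maximizes qᵀ A x over Δ_m (i.e., q is a best response to x), and x̄ = (x + q)/2, then qᵀ A x̄ − xᵀ A x̄ + xᵀ A x − x̄ᵀ A x ≤ 1/2. More generally, in a polymatrix game with normalized payoffs, setting x' = (x̄ + x*)/2 where x̄ is a profile of best responses to x*, every player i with maximum regret satisfies Df_i^δ(x*, x') ≤ 1/2. -/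
open Finset
open scoped Classical

noncomputable section

/-- maximum of `v` over a finset `S` (junk value `0` if `S` is empty). -/
noncomputable def fsMaxOn {α : Type*} (S : Finset α) (v : α → ℝ) : ℝ :=
  if h : S.Nonempty then S.sup' h v else 0

/-- minimum of `v` over a finset `S` (junk value `0` if `S` is empty). -/
noncomputable def fsMinOn {α : Type*} (S : Finset α) (v : α → ℝ) : ℝ :=
  if h : S.Nonempty then S.inf' h v else 0

section Polymatrix

variable {n : ℕ} (m : Fin n → ℕ) (N : Fin n → Finset (Fin n))
  (A : ∀ i j : Fin n, Matrix (Fin (m i)) (Fin (m j)) ℝ)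

/-- vector of pure-strategy payoffs of player `i` against profile `x`:
`u_i^s(x) = Σ_{j ∈ N(i)} A_ij x_j`. -/
def usVec (i : Fin n) (x : ∀ j, Fin (m j) → ℝ) : Fin (m i) → ℝ :=
  fun k => ∑ j ∈ N i, ∑ q, A i j k q * x j q

/-- payoff to player `i` from playing the (possibly formal) strategy `y`
against profile `x`: `u_i(y, x) = yᵀ u_i^s(x)`. -/
def payTo (i : Fin n) (y : Fin (m i) → ℝ) (x : ∀ j, Fin (m j) → ℝ) : ℝ :=
  ∑ k, y k * usVec m N A i x k

/-- payoff of player `i` under profile `x`. -/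
def payoff (i : Fin n) (x : ∀ j, Fin (m j) → ℝ) : ℝ := payTo m N A i (x i) x

/-- best-response payoff of player `i` against `x`. -/
def brp (i : Fin n) (x : ∀ j, Fin (m j) → ℝ) : ℝ := fsMaxOn univ (usVec m N A i x)

/-- pure best responses of player `i` against `x`. -/
def brSet (i : Fin n) (x : ∀ j, Fin (m j) → ℝ) : Finset (Fin (m i)) :=
  univ.filter fun k => ∀ l, usVec m N A i x l ≤ usVec m N A i x k

/-- `δ`-best responses of player `i` against `x`. -/
def brdSet (δ : ℝ) (i : Fin n) (x : ∀ j, Fin (m j) → ℝ) : Finset (Fin (m i)) :=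
  univ.filter fun k => brp m N A i x - δ ≤ usVec m N A i x k

/-- regret of player `i` under `x`: `f_i(x)`. -/
def regret (i : Fin n) (x : ∀ j, Fin (m j) → ℝ) : ℝ :=
  brp m N A i x - payoff m N A i x

/-- maximum regret `f(x) = max_i f_i(x)`. -/
def maxRegret (x : ∀ j, Fin (m j) → ℝ) : ℝ := fsMaxOn univ fun i => regret m N A i x

/-- set of players with maximum regret `K(x)`. -/
def Kset (x : ∀ j, Fin (m j) → ℝ) : Finset (Fin n) :=
  univ.filter fun i => regret m N A i x = maxRegret m N A x

/-- `Df_i^δ(x, x')`. -/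
def Dfd (δ : ℝ) (i : Fin n) (x x' : ∀ j, Fin (m j) → ℝ) : ℝ :=
  fsMaxOn (brdSet m N A δ i x) (usVec m N A i x')
    - payTo m N A i (x i) x' - payTo m N A i (x' i) x + payTo m N A i (x i) x

/-- `Df^δ(x, x') = max_{i ∈ K(x)} Df_i^δ(x, x') - f(x)`. -/
def DfdAll (δ : ℝ) (x x' : ∀ j, Fin (m j) → ℝ) : ℝ :=
  fsMaxOn (Kset m N A x) (fun i => Dfd m N A δ i x x') - maxRegret m N A x

/-- `Df_i(x, x')` (with exact best responses). -/
def Dfbr (i : Fin n) (x x' : ∀ j, Fin (m j) → ℝ) : ℝ :=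
  fsMaxOn (brSet m N A i x) (usVec m N A i x')
    - payTo m N A i (x i) x' - payTo m N A i (x' i) x + payTo m N A i (x i) x

/-- the profile `(1-ε)x + εx'`. -/
def mix (x x' : ∀ j, Fin (m j) → ℝ) (ε : ℝ) : ∀ j, Fin (m j) → ℝ :=
  fun j => (1 - ε) • x j + ε • x' j

/-- `Λ_i^δ(x, x', ε)`; if the complement of the `δ`-best-response set is empty
the inner maximum is `-∞`, i.e. `Λ_i^δ = 0`. -/
def Lamd (δ : ℝ) (i : Fin n) (x x' : ∀ j, Fin (m j) → ℝ) (ε : ℝ) : ℝ :=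
  if _h : ((brdSet m N A δ i x)ᶜ).Nonempty then
    max 0 (fsMaxOn (brdSet m N A δ i x)ᶜ (usVec m N A i (mix m x x' ε))
         - fsMaxOn (brdSet m N A δ i x) (usVec m N A i (mix m x x' ε)))
  else 0

/-- `Λ_i(x, x', ε)` (with exact best responses). -/
def LamBr (i : Fin n) (x x' : ∀ j, Fin (m j) → ℝ) (ε : ℝ) : ℝ :=
  if _h : ((brSet m N A i x)ᶜ).Nonempty then
    max 0 (fsMaxOn (brSet m N A i x)ᶜ (usVec m N A i (mix m x x' ε))
         - fsMaxOn (brSet m N A i x) (usVec m N A i (mix m x x' ε)))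
  else 0

/-- `x` is a mixed strategy profile. -/
def isProfile (x : ∀ j, Fin (m j) → ℝ) : Prop :=
  ∀ j, x j ∈ stdSimplex ℝ (Fin (m j))

/-- the game is normalized: all pure-strategy payoffs of every player lie in
`[0,1]` against every mixed profile. -/
def normalized : Prop :=
  ∀ i (x : ∀ j, Fin (m j) → ℝ), isProfile m x →
    ∀ k, usVec m N A i x k ∈ Set.Icc (0:ℝ) 1

/-! Each pure payoff against `x' = (x̄ + x*)/2` is at most `(1 + brp_i(x*))/2`, and the
three payoff terms of `Df_i^δ(x*, x')` are linear in `x'`, so with `u_i(x̄_i, x*) = brp_i(x*)`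
everything cancels down to `1/2 - u_i(x*_i, x̄)/2 ≤ 1/2`. -/

lemma le_fsMaxOn {α : Type*} {S : Finset α} {v : α → ℝ} {k : α} (hk : k ∈ S) :
    v k ≤ fsMaxOn S v := by
  rw [fsMaxOn, dif_pos ⟨k, hk⟩]
  exact le_sup' v hk

lemma fsMaxOn_le {α : Type*} {S : Finset α} {v : α → ℝ} {c : ℝ} (hc : 0 ≤ c)
    (h : ∀ k ∈ S, v k ≤ c) : fsMaxOn S v ≤ c := by
  unfold fsMaxOn
  split_ifs
  · exact sup'_le _ _ h
  · exact hc

lemma fsMaxOn_nonneg {α : Type*} {S : Finset α} {v : α → ℝ} (h : ∀ k ∈ S, 0 ≤ v k) :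
    0 ≤ fsMaxOn S v := by
  unfold fsMaxOn
  split_ifs with hS
  · obtain ⟨k, hk⟩ := hS
    exact (h k hk).trans (le_sup' v hk)
  · exact le_rfl

lemma usVec_add (i : Fin n) (x y : ∀ j, Fin (m j) → ℝ) :
    usVec m N A i (x + y) = usVec m N A i x + usVec m N A i y := by
  ext k
  simp only [usVec, Pi.add_apply, mul_add, sum_add_distrib]

lemma usVec_smul (i : Fin n) (c : ℝ) (x : ∀ j, Fin (m j) → ℝ) :
    usVec m N A i (c • x) = c • usVec m N A i x := by
  ext k
  simp only [usVec, Pi.smul_apply, smul_eq_mul, mul_sum]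
  exact sum_congr rfl fun j _ => sum_congr rfl fun q _ => by ring

lemma payTo_eq_dotProduct (i : Fin n) (y : Fin (m i) → ℝ) (x : ∀ j, Fin (m j) → ℝ) :
    payTo m N A i y x = y ⬝ᵥ usVec m N A i x :=
  rfl

lemma usVec_le_brp (i : Fin n) (x : ∀ j, Fin (m j) → ℝ) (k : Fin (m i)) :
    usVec m N A i x k ≤ brp m N A i x :=
  le_fsMaxOn (mem_univ k)

lemma brp_nonneg (hnorm : normalized m N A) (i : Fin n) {x : ∀ j, Fin (m j) → ℝ}
    (hx : isProfile m x) : 0 ≤ brp m N A i x :=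
  fsMaxOn_nonneg fun k _ => (hnorm i x hx k).1

lemma payTo_nonneg (hnorm : normalized m N A) (i : Fin n) {y : Fin (m i) → ℝ}
    (hy : y ∈ stdSimplex ℝ (Fin (m i))) {x : ∀ j, Fin (m j) → ℝ} (hx : isProfile m x) :
    0 ≤ payTo m N A i y x :=
  dotProduct_nonneg_of_nonneg hy.1 fun k => (hnorm i x hx k).1

theorem stmt1 (hnorm : normalized m N A)
    (δ : ℝ)
    (xstar xbar : ∀ j, Fin (m j) → ℝ)
    (hx : isProfile m xstar) (hb : isProfile m xbar)
    (hbr : ∀ i, payTo m N A i (xbar i) xstar = brp m N A i xstar)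
    (i : Fin n) :
    Dfd m N A δ i xstar (fun j => (2⁻¹ : ℝ) • (xbar j + xstar j)) ≤ 1 / 2 := by
  set x' : ∀ j, Fin (m j) → ℝ := fun j => (2⁻¹ : ℝ) • (xbar j + xstar j)
  have hus : usVec m N A i x' = (2⁻¹ : ℝ) • (usVec m N A i xbar + usVec m N A i xstar) := by
    rw [← usVec_add, ← usVec_smul]
    rfl
  have hmax : fsMaxOn (brdSet m N A δ i xstar) (usVec m N A i x')
      ≤ 2⁻¹ * (1 + brp m N A i xstar) := by
    refine fsMaxOn_le (by linarith [brp_nonneg m N A hnorm i hx]) fun k _ => ?_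
    rw [hus]
    simp only [Pi.smul_apply, Pi.add_apply, smul_eq_mul]
    linarith [(hnorm i xbar hb k).2, usVec_le_brp m N A i xstar k]
  have hpay_right : payTo m N A i (xstar i) x'
      = 2⁻¹ * (payTo m N A i (xstar i) xbar + payTo m N A i (xstar i) xstar) := by
    simp only [payTo_eq_dotProduct, hus, dotProduct_smul, dotProduct_add, smul_eq_mul]
  have hpay_left : payTo m N A i (x' i) xstar
      = 2⁻¹ * (brp m N A i xstar + payTo m N A i (xstar i) xstar) := by
    rw [← hbr i]
    simp only [x', payTo_eq_dotProduct, smul_dotProduct, add_dotProduct, smul_eq_mul]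
  have hpos := payTo_nonneg m N A hnorm i (hx i) hb
  rw [Dfd, hpay_right, hpay_left]
  linarith

end Polymatrix
end
end

section
/- Multiplicative decrease: let 0 < δ ≤ 0.5, ε = δ/(δ+2), and suppose f_new − f ≤ ε(D − f) + ε²(1 − D) with D − f ≤ −δ and f, f_new, D real numbers with f ≥ 0. Then f_new ≤ (1 − (δ/(δ+2))²)·f. -/
/-- multiplicative decrease. If `0 < δ ≤ 0.5`, `ε = δ/(δ+2)`,
`f ≥ 0`, `D − f ≤ −δ` and `f_new − f ≤ ε(D − f) + ε²(1 − D)`, then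
`f_new ≤ (1 − (δ/(δ+2))²)·f`. -/
theorem stmt9 (δ f fnew D : ℝ) (hδ : 0 < δ) (hδ' : δ ≤ 0.5)
    (hf : 0 ≤ f) (hD : D - f ≤ -δ)
    (h : fnew - f ≤ (δ / (δ + 2)) * (D - f) + (δ / (δ + 2)) ^ 2 * (1 - D)) :
    fnew ≤ (1 - (δ / (δ + 2)) ^ 2) * f := by
  have h2 : (0:ℝ) < δ + 2 := by linarith
  have key : (δ / (δ + 2)) * (D - f) + (δ / (δ + 2)) ^ 2 * (1 - D)
      ≤ -(δ / (δ + 2)) ^ 2 * f := by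
    rw [div_pow, ← sub_nonneg]
    have e : -(δ ^ 2 / (δ + 2) ^ 2) * f
        - (δ / (δ + 2) * (D - f) + δ ^ 2 / (δ + 2) ^ 2 * (1 - D))
        = (-(δ ^ 2 * f) - (δ * (δ + 2) * (D - f) + δ ^ 2 * (1 - D))) / (δ + 2) ^ 2 := by
      field_simp
    rw [e]
    apply div_nonneg _ (by positivity)
    nlinarith [mul_le_mul_of_nonneg_left hD (mul_pos hδ h2).le, mul_nonneg hf (sq_nonneg δ)]
  nlinarith [key]
end
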